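/- Fix an integer g ≥ 1 and a symmetric g×g complex matrix τ whose imaginary part is positive definite. Let m ≥ 0, let a_1, …, a_{m+2} ∈ ℂ^g, let ζ ∈ ℂ^g, and let α_1, …, α_{m+2} ∈ ℂ. If ∑_{i=1}^{m+2} α_i Θ_a(ζ + a_i) = 0 for every a ∈ {0,1}^g (i.e., the points K(ζ + a_i) of the Kummer map satisfy the linear relation with coefficients α_i), then for every z ∈ ℂ^g one has ∑_{i=1}^{m+2} α_i θ(z + 2ζ + a_i)·θ(z − a_i) = 0. -/

import Mathlib

open Finset Complex

/-- The summand of the Riemann theta series: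
`exp(πi·nᵀτn + 2πi·nᵀz)` for `n ∈ ℤ^g`. -/
noncomputable def riemannThetaTerm {g : ℕ} (τ : Matrix (Fin g) (Fin g) ℂ)
    (z : Fin g → ℂ) (n : Fin g → ℤ) : ℂ :=
  Complex.exp ((Real.pi : ℂ) * Complex.I *
      (∑ i : Fin g, ∑ j : Fin g, (n i : ℂ) * τ i j * (n j : ℂ)) +
    2 * (Real.pi : ℂ) * Complex.I * ∑ i : Fin g, (n i : ℂ) * z i)

/-- The Riemann theta function `θ(z) = ∑_{n ∈ ℤ^g} exp(πi·nᵀτn + 2πi·nᵀz)`. -/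
noncomputable def riemannTheta {g : ℕ} (τ : Matrix (Fin g) (Fin g) ℂ)
    (z : Fin g → ℂ) : ℂ :=
  ∑' n : Fin g → ℤ, riemannThetaTerm τ z n

/-- The second-order theta function with characteristic `a ∈ {0,1}^g`:
`Θ_a(z) = ∑_{n ∈ ℤ^g} exp(2πi·(n+a/2)ᵀτ(n+a/2) + 4πi·(n+a/2)ᵀz)`. -/
noncomputable def theta2 {g : ℕ} (τ : Matrix (Fin g) (Fin g) ℂ)
    (a : Fin g → Fin 2) (z : Fin g → ℂ) : ℂ :=
  ∑' n : Fin g → ℤ,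
    Complex.exp (2 * (Real.pi : ℂ) * Complex.I *
        (∑ i : Fin g, ∑ j : Fin g,
          ((n i : ℂ) + ((a i : ℕ) : ℂ) / 2) * τ i j * ((n j : ℂ) + ((a j : ℕ) : ℂ) / 2)) +
      4 * (Real.pi : ℂ) * Complex.I *
        ∑ i : Fin g, ((n i : ℂ) + ((a i : ℕ) : ℂ) / 2) * z i)

/-! The heart of the matter is the addition formula
`θ(x + y) θ(x - y) = ∑_b Θ_b(x) Θ_b(y)`. Multiplying the two theta series gives a sum over
pairs `(n, m) ∈ ℤ^g × ℤ^g`; writing `n = u + v + b`, `m = u - v` with `b ∈ {0,1}^g` the parity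
of `n + m` is a bijection onto `{0,1}^g × ℤ^g × ℤ^g`, and it turns each summand into the product
of the `Θ_b`-summands at `(x, u)` and at `(y, v)`. All rearrangements are justified by absolute
convergence, which holds because `Im τ` is positive definite. With `x = z + ζ` and `y = ζ + a_i`
the sum `∑ α_i θ(z + 2ζ + a_i) θ(z - a_i)` becomes `∑_b Θ_b(z + ζ) ∑_i α_i Θ_b(ζ + a_i) = 0`. -/

open Matrix in
open scoped MatrixOrder in
theorem Matrix.PosDef.exists_pos_mul_sum_sq_le {ι : Type*} [Fintype ι] [DecidableEq ι]
    {Y : Matrix ι ι ℝ} (hY : Y.PosDef) :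
    ∃ c > 0, ∀ v : ι → ℝ, c * ∑ i, v i ^ 2 ≤ ∑ i, ∑ j, v i * Y i j * v j := by
  cases isEmpty_or_nonempty ι
  · exact ⟨1, one_pos, fun v => by simp⟩
  obtain ⟨c, hc, hcY⟩ : ∃ c > 0, algebraMap ℝ (Matrix ι ι ℝ) c ≤ Y :=
    (CFC.exists_pos_algebraMap_le_iff hY.isHermitian).2
      fun x hx => hY.isStrictlyPositive.spectrum_pos hx
  refine ⟨c, hc, fun v => ?_⟩
  have hv := (Matrix.le_iff.mp hcY).dotProduct_mulVec_nonneg v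
  rw [Algebra.algebraMap_eq_smul_one, sub_mulVec, smul_mulVec, one_mulVec, dotProduct_sub,
    dotProduct_smul, sub_nonneg, star_trivial] at hv
  calc c * ∑ i, v i ^ 2 = c • (v ⬝ᵥ v) := by simp [dotProduct, sq]
    _ ≤ v ⬝ᵥ Y *ᵥ v := hv
    _ = ∑ i, ∑ j, v i * Y i j * v j := by simp only [dotProduct, mulVec, mul_sum, mul_assoc]

theorem summable_pi_prod_of_nonneg {ι κ : Type*} [Fintype ι] {f : ι → κ → ℝ}
    (hf0 : ∀ i k, 0 ≤ f i k) (hf : ∀ i, Summable (f i)) :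
    Summable fun x : ι → κ => ∏ i, f i (x i) := by
  classical
  refine summable_of_sum_le (c := ∏ i, ∑' k, f i k) (fun x => prod_nonneg fun i _ => hf0 i _)
    fun u => ?_
  calc ∑ x ∈ u, ∏ i, f i (x i)
      ≤ ∑ x ∈ Fintype.piFinset fun i => u.image (· i), ∏ i, f i (x i) :=
        sum_le_sum_of_subset_of_nonneg
          (fun x hx => Fintype.mem_piFinset.2 fun i => mem_image_of_mem _ hx)
          fun x _ _ => prod_nonneg fun i _ => hf0 i _
    _ = ∏ i, ∑ k ∈ u.image (· i), f i k := (prod_univ_sum _ _).symm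
    _ ≤ ∏ i, ∑' k, f i k := prod_le_prod (fun i _ => sum_nonneg fun k _ => hf0 i k)
          fun i _ => (hf i).sum_le_tsum _ fun k _ => hf0 i k

theorem summable_exp_neg_mul_add_sq_add_abs {a : ℝ} (ha : 0 < a) (C s : ℝ) :
    Summable fun t : ℤ => Real.exp (-a * (t + s) ^ 2 + C * |t + s|) := by
  have hbound := (summable_pow_mul_jacobiTheta₂_term_bound (|C| / (2 * Real.pi))
    (div_pos ha (by positivity : 0 < 2 * Real.pi)) 0).mul_left (Real.exp (a * s ^ 2 + |C| * |s|))
  refine hbound.of_nonneg_of_le (fun t => (Real.exp_pos _).le) fun t => ?_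
  have hexp : -Real.pi * (a / (2 * Real.pi) * t ^ 2 - 2 * (|C| / (2 * Real.pi)) * ((|t| : ℤ) : ℝ))
      = -(a / 2) * t ^ 2 + |C| * |(t : ℝ)| := by
    rw [Int.cast_abs]; field_simp; ring
  rw [pow_zero, one_mul, ← Real.exp_add, hexp, Real.exp_le_exp]
  have habs : C * |t + s| ≤ |C| * (|(t : ℝ)| + |s|) :=
    (mul_le_mul_of_nonneg_right (le_abs_self C) (abs_nonneg _)).trans
      (mul_le_mul_of_nonneg_left (abs_add_le _ _) (abs_nonneg C))
  nlinarith [sq_nonneg ((t : ℝ) + 2 * s)]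

theorem summable_exp_neg_quadratic {ι : Type*} [Fintype ι] [DecidableEq ι]
    {Y : Matrix ι ι ℝ} (hY : Y.PosDef) {k : ℝ} (hk : 0 < k) (l : ℝ) (s y : ι → ℝ) :
    Summable fun n : ι → ℤ => Real.exp (-(k * ∑ i, ∑ j, (n i + s i) * Y i j * (n j + s j))
      - l * ∑ i, (n i + s i) * y i) := by
  obtain ⟨c, hc, hcY⟩ := hY.exists_pos_mul_sum_sq_le
  refine (summable_pi_prod_of_nonneg (fun i t => (Real.exp_pos _).le) fun i =>
    summable_exp_neg_mul_add_sq_add_abs (mul_pos hk hc) |l * y i| (s i)).of_nonneg_of_le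
    (fun n => (Real.exp_pos _).le) fun n => ?_
  rw [← Real.exp_sum, Real.exp_le_exp, sum_add_distrib, ← mul_sum]
  have hquad := mul_le_mul_of_nonneg_left (hcY fun i => n i + s i) hk.le
  have hlin : -(l * ∑ i, (n i + s i) * y i) ≤ ∑ i, |l * y i| * |n i + s i| := by
    rw [mul_sum, ← sum_neg_distrib]
    exact sum_le_sum fun i _ => by
      rw [← abs_mul]; exact (neg_le_abs _).trans_eq (congrArg abs (by ring))
  linarith

theorem norm_cexp_quadratic {ι : Type*} [Fintype ι] (τ : Matrix ι ι ℂ) (z : ι → ℂ)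
    (v : ι → ℝ) (k l : ℝ) :
    ‖cexp (k * I * ∑ i, ∑ j, (v i : ℂ) * τ i j * v j + l * I * ∑ i, (v i : ℂ) * z i)‖
      = Real.exp (-(k * ∑ i, ∑ j, v i * (τ i j).im * v j) - l * ∑ i, v i * (z i).im) := by
  rw [norm_exp]
  congr 1
  simp only [add_re, mul_re, ofReal_re, ofReal_im, I_re, I_im, re_sum, im_sum, mul_im, mul_zero,
    mul_one, zero_mul, sub_self, sub_zero, add_zero, zero_add, zero_sub]
  ring

def sumDiffEquiv (g : ℕ) :
    (Fin g → Fin 2) × (Fin g → ℤ) × (Fin g → ℤ) ≃ (Fin g → ℤ) × (Fin g → ℤ) where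
  toFun q := (fun i => q.2.1 i + q.2.2 i + (q.1 i : ℕ), fun i => q.2.1 i - q.2.2 i)
  invFun p := (fun i => if (p.1 i + p.2 i) % 2 = 0 then 0 else 1,
    fun i => (p.1 i + p.2 i) / 2, fun i => (p.1 i + p.2 i) / 2 - p.2 i)
  left_inv := by
    rintro ⟨b, u, v⟩
    have hb : ∀ i, (b i : ℕ) = 0 ∨ (b i : ℕ) = 1 := fun i => by omega
    refine Prod.ext (funext fun i => Fin.ext ?_)
      (Prod.ext (funext fun i => ?_) (funext fun i => ?_))
    · rcases hb i with h | h <;> simp only [h] <;> split_ifs <;> omega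
    all_goals rcases hb i with h | h <;> simp only [h] <;> omega
  right_inv := by
    rintro ⟨n, m⟩
    refine Prod.ext (funext fun i => ?_) (funext fun i => ?_)
    · dsimp only
      split_ifs <;> simp only [Fin.val_zero, Fin.val_one, Nat.cast_zero, Nat.cast_one] <;> omega
    · dsimp only
      omega

section
variable {g : ℕ} {τ : Matrix (Fin g) (Fin g) ℂ}

theorem summable_norm_riemannThetaTerm (hτ : (Matrix.of fun i j => (τ i j).im).PosDef)
    (z : Fin g → ℂ) : Summable fun n => ‖riemannThetaTerm τ z n‖ := by
  refine (summable_exp_neg_quadratic hτ Real.pi_pos (2 * Real.pi) 0 fun i => (z i).im).congr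
    fun n => ?_
  have hn := norm_cexp_quadratic τ z (fun i => (n i : ℝ)) Real.pi (2 * Real.pi)
  push_cast at hn
  simp [riemannThetaTerm, hn]

variable (τ) in
noncomputable def theta2Term (b : Fin g → Fin 2) (z : Fin g → ℂ) (n : Fin g → ℤ) : ℂ :=
  cexp (2 * (Real.pi : ℂ) * I *
      (∑ i, ∑ j, ((n i : ℂ) + ((b i : ℕ) : ℂ) / 2) * τ i j * ((n j : ℂ) + ((b j : ℕ) : ℂ) / 2)) +
    4 * (Real.pi : ℂ) * I * ∑ i, ((n i : ℂ) + ((b i : ℕ) : ℂ) / 2) * z i)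

theorem theta2_eq_tsum (b : Fin g → Fin 2) (z : Fin g → ℂ) :
    theta2 τ b z = ∑' n, theta2Term τ b z n := rfl

theorem summable_norm_theta2Term (hτ : (Matrix.of fun i j => (τ i j).im).PosDef)
    (b : Fin g → Fin 2) (z : Fin g → ℂ) : Summable fun n => ‖theta2Term τ b z n‖ := by
  refine (summable_exp_neg_quadratic hτ (by positivity : 0 < 2 * Real.pi) (4 * Real.pi)
    (fun i => ((b i : ℕ) : ℝ) / 2) fun i => (z i).im).congr fun n => ?_
  have hn := norm_cexp_quadratic τ z (fun i => n i + ((b i : ℕ) : ℝ) / 2) (2 * Real.pi)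
    (4 * Real.pi)
  push_cast at hn
  simp [theta2Term, hn]

variable (τ) in
theorem riemannThetaTerm_mul_riemannThetaTerm (x y : Fin g → ℂ) (b : Fin g → Fin 2)
    (u v : Fin g → ℤ) :
    riemannThetaTerm τ (x + y) (fun i => u i + v i + (b i : ℕ))
      * riemannThetaTerm τ (x - y) (fun i => u i - v i)
      = theta2Term τ b x u * theta2Term τ b y v := by
  rw [riemannThetaTerm, riemannThetaTerm, theta2Term, theta2Term, ← Complex.exp_add,
    ← Complex.exp_add]
  congr 1
  have hquad : (∑ i, ∑ j, ((u i + v i + (b i : ℕ) : ℤ) : ℂ) * τ i j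
        * ((u j + v j + (b j : ℕ) : ℤ) : ℂ))
      + ∑ i, ∑ j, ((u i - v i : ℤ) : ℂ) * τ i j * ((u j - v j : ℤ) : ℂ)
      = 2 * ∑ i, ∑ j, ((u i : ℂ) + ((b i : ℕ) : ℂ) / 2) * τ i j
          * ((u j : ℂ) + ((b j : ℕ) : ℂ) / 2)
      + 2 * ∑ i, ∑ j, ((v i : ℂ) + ((b i : ℕ) : ℂ) / 2) * τ i j
          * ((v j : ℂ) + ((b j : ℕ) : ℂ) / 2) := by
    simp only [mul_sum, ← sum_add_distrib]
    refine sum_congr rfl fun i _ => sum_congr rfl fun j _ => ?_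
    push_cast
    ring
  have hlin : ∑ i, ((u i + v i + (b i : ℕ) : ℤ) : ℂ) * (x + y) i
      + ∑ i, ((u i - v i : ℤ) : ℂ) * (x - y) i
      = 2 * ∑ i, ((u i : ℂ) + ((b i : ℕ) : ℂ) / 2) * x i
      + 2 * ∑ i, ((v i : ℂ) + ((b i : ℕ) : ℂ) / 2) * y i := by
    simp only [mul_sum, ← sum_add_distrib]
    refine sum_congr rfl fun i _ => ?_
    push_cast [Pi.add_apply, Pi.sub_apply]
    ring
  linear_combination (Real.pi : ℂ) * I * hquad + 2 * (Real.pi : ℂ) * I * hlin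

theorem riemannTheta_add_mul_riemannTheta_sub
    (hτ : (Matrix.of fun i j => (τ i j).im).PosDef) (x y : Fin g → ℂ) :
    riemannTheta τ (x + y) * riemannTheta τ (x - y)
      = ∑ b : Fin g → Fin 2, theta2 τ b x * theta2 τ b y := by
  have hprod : ∀ b, Summable fun p : (Fin g → ℤ) × (Fin g → ℤ) =>
      theta2Term τ b x p.1 * theta2Term τ b y p.2 := fun b =>
    ((summable_norm_theta2Term hτ b x).mul_norm (summable_norm_theta2Term hτ b y)).of_norm
  have hsummable : Summable fun q : (Fin g → Fin 2) × (Fin g → ℤ) × (Fin g → ℤ) =>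
      theta2Term τ q.1 x q.2.1 * theta2Term τ q.1 y q.2.2 := by
    have hpair := ((summable_norm_riemannThetaTerm hτ (x + y)).mul_norm
      (summable_norm_riemannThetaTerm hτ (x - y))).of_norm
    exact ((sumDiffEquiv g).summable_iff.mpr hpair).congr fun q =>
      riemannThetaTerm_mul_riemannThetaTerm τ x y _ _ _
  calc riemannTheta τ (x + y) * riemannTheta τ (x - y)
      = ∑' p : (Fin g → ℤ) × (Fin g → ℤ),
          riemannThetaTerm τ (x + y) p.1 * riemannThetaTerm τ (x - y) p.2 :=
        tsum_mul_tsum_of_summable_norm (summable_norm_riemannThetaTerm hτ _)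
          (summable_norm_riemannThetaTerm hτ _)
    _ = ∑' q : (Fin g → Fin 2) × (Fin g → ℤ) × (Fin g → ℤ),
          theta2Term τ q.1 x q.2.1 * theta2Term τ q.1 y q.2.2 := by
        rw [← (sumDiffEquiv g).tsum_eq]
        exact tsum_congr fun q => riemannThetaTerm_mul_riemannThetaTerm τ x y _ _ _
    _ = ∑ b : Fin g → Fin 2, theta2 τ b x * theta2 τ b y := by
        rw [hsummable.tsum_prod' hprod, tsum_fintype]
        refine sum_congr rfl fun b _ => ?_
        rw [theta2_eq_tsum, theta2_eq_tsum, tsum_mul_tsum_of_summable_norm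
          (summable_norm_theta2Term hτ b x) (summable_norm_theta2Term hτ b y)]

end

theorem theta_relation_of_kummer_relation_general (g : ℕ) (τ : Matrix (Fin g) (Fin g) ℂ)
    (hτ' : (Matrix.of fun i j => (τ i j).im).PosDef)
    (m : ℕ) (a : Fin (m + 2) → Fin g → ℂ) (ζ : Fin g → ℂ) (α : Fin (m + 2) → ℂ)
    (h : ∀ b : Fin g → Fin 2, ∑ i : Fin (m + 2), α i * theta2 τ b (ζ + a i) = 0) :
    ∀ z : Fin g → ℂ,
      ∑ i : Fin (m + 2),
        α i * riemannTheta τ (z + 2 • ζ + a i) * riemannTheta τ (z - a i) = 0 := by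
  intro z
  have hsplit : ∀ i, riemannTheta τ (z + 2 • ζ + a i) * riemannTheta τ (z - a i)
      = ∑ b : Fin g → Fin 2, theta2 τ b (z + ζ) * theta2 τ b (ζ + a i) := fun i => by
    rw [← riemannTheta_add_mul_riemannTheta_sub hτ']
    congr 2 <;> abel
  calc ∑ i, α i * riemannTheta τ (z + 2 • ζ + a i) * riemannTheta τ (z - a i)
      = ∑ b : Fin g → Fin 2, theta2 τ b (z + ζ) * ∑ i, α i * theta2 τ b (ζ + a i) := by
        simp only [mul_assoc, hsplit, mul_sum]
        rw [sum_comm]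
        exact sum_congr rfl fun b _ => sum_congr rfl fun i _ => by ring
    _ = 0 := by simp [h]

/-- if the points `K(ζ + a_i)` of the Kummer map satisfy the linear
relation `∑ α_i Θ_b(ζ + a_i) = 0` for every `b ∈ {0,1}^g`, then for every `z ∈ ℂ^g`
one has `∑ α_i θ(z + 2ζ + a_i)·θ(z − a_i) = 0`. -/
theorem theta_relation_of_kummer_relation (g : ℕ) (hg : 1 ≤ g)
    (τ : Matrix (Fin g) (Fin g) ℂ) (hτ : τ.IsSymm)
    (hτ' : (Matrix.of fun i j => (τ i j).im).PosDef)
    (m : ℕ) (a : Fin (m + 2) → Fin g → ℂ) (ζ : Fin g → ℂ) (α : Fin (m + 2) → ℂ)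
    (h : ∀ b : Fin g → Fin 2, ∑ i : Fin (m + 2), α i * theta2 τ b (ζ + a i) = 0) :
    ∀ z : Fin g → ℂ,
      ∑ i : Fin (m + 2),
        α i * riemannTheta τ (z + 2 • ζ + a i) * riemannTheta τ (z - a i) = 0 :=
  theta_relation_of_kummer_relation_general g τ hτ' m a ζ α h
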